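/- Let Γ be a finite group, S a scheme, and G a group scheme over S equipped with a Γ-action by group-scheme automorphisms over S (so that Γ acts on the group G(T) = Hom_S(T, G) functorially in the S-scheme T). Then the 1-cocycle functor Z¹_{Γ,G}, sending an S-scheme T to the set of maps φ : Γ → G(T) satisfying φ(στ) = φ(σ)·(σ·φ(τ)) for all σ, τ ∈ Γ, is representable by an S-scheme Z¹_{Γ,G}. If moreover G is affine then Z¹_{Γ,G} is affine. In addition, there are S-morphisms c_γ : Z¹_{Γ,G} → G for each γ ∈ Γ such that for every S-scheme T, every morphism φ' : T → Z¹_{Γ,G}, and the 1-cocycle φ ∈ Z¹_{Γ,G}(T) corresponding to φ' under representability, one has c_γ ∘ φ' = φ(γ). -/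

import Mathlib

/-!
Transport the group law and the `Γ`-action of `H(T)` to `T ⟶ G` through `e`. The cocycle
condition then says that two morphisms `∏_Γ G ⟶ ∏_{Γ × Γ} G`, namely
`(g_γ) ↦ (g_{στ})` and `(g_γ) ↦ (g_σ · σ(g_τ))`, agree, so their equalizer represents the
cocycle functor, the universal cocycle being given by the projections. If `G` is affine, then
`S` is affine, being a retract of `G` through the unit section (a section of a separated
morphism is a closed immersion); hence the finite products `∏ G` over `S` are affine, and the
equalizer is a closed subscheme of `∏_Γ G` because `∏_{Γ × Γ} G` is separated over `S`.
-/

open CategoryTheory CategoryTheory.Limits AlgebraicGeometry Opposite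

namespace CategoryTheory.GrpCocycle

variable {C : Type*} [Category C] {G : C} {H : Cᵒᵖ ⥤ GrpCat}
  (e : H ⋙ forget GrpCat ≅ yoneda.obj G)

noncomputable def homMul {T : C} (a b : T ⟶ G) : T ⟶ G :=
  e.hom.app (op T) (e.inv.app (op T) a * e.inv.app (op T) b)

variable {Γ : Type*} [Group Γ] (ρ : Γ →* Aut H)

noncomputable def homSMul (σ : Γ) {T : C} (a : T ⟶ G) : T ⟶ G :=
  e.hom.app (op T) ((ρ σ).hom.app (op T) (e.inv.app (op T) a))

lemma hom_app_mul {T : C} (x y : H.obj (op T)) :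
    e.hom.app (op T) (x * y) = homMul e (e.hom.app (op T) x) (e.hom.app (op T) y) := by
  simp only [homMul, Iso.hom_inv_id_app_apply]

lemma hom_app_smul (σ : Γ) {T : C} (x : H.obj (op T)) :
    e.hom.app (op T) ((ρ σ).hom.app (op T) x) = homSMul e ρ σ (e.hom.app (op T) x) := by
  simp only [homSMul, Iso.hom_inv_id_app_apply]

lemma hom_app_injective (T : C) : Function.Injective (e.hom.app (op T)) :=
  (e.app (op T)).toEquiv.injective

lemma comp_hom_app {T' T : C} (h : T' ⟶ T) (x : H.obj (op T)) :
    h ≫ e.hom.app (op T) x = e.hom.app (op T') (H.map h.op x) :=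
  (e.hom.naturality_apply h.op x).symm

lemma inv_app_comp {T' T : C} (h : T' ⟶ T) (a : T ⟶ G) :
    e.inv.app (op T') (h ≫ a) = H.map h.op (e.inv.app (op T) a) :=
  e.inv.naturality_apply h.op a

lemma comp_homMul {T' T : C} (h : T' ⟶ T) (a b : T ⟶ G) :
    h ≫ homMul e a b = homMul e (h ≫ a) (h ≫ b) := by
  rw [homMul, comp_hom_app, map_mul, homMul, inv_app_comp, inv_app_comp]

lemma comp_homSMul {T' T : C} (h : T' ⟶ T) (σ : Γ) (a : T ⟶ G) :
    h ≫ homSMul e ρ σ a = homSMul e ρ σ (h ≫ a) := by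
  rw [homSMul, comp_hom_app, homSMul, inv_app_comp, ← (ρ σ).hom.naturality_apply h.op]

def IsCocycle {T : C} (φ : Γ → H.obj (op T)) : Prop :=
  ∀ σ τ : Γ, φ (σ * τ) = φ σ * (ρ σ).hom.app (op T) (φ τ)

def IsHomCocycle {T : C} (a : Γ → (T ⟶ G)) : Prop :=
  ∀ σ τ : Γ, a (σ * τ) = homMul e (a σ) (homSMul e ρ σ (a τ))

lemma isHomCocycle_hom_app_iff {T : C} (φ : Γ → H.obj (op T)) :
    IsHomCocycle e ρ (fun γ => e.hom.app (op T) (φ γ)) ↔ IsCocycle ρ φ := by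
  simp only [IsHomCocycle, IsCocycle, ← hom_app_smul, ← hom_app_mul,
    (hom_app_injective e T).eq_iff]

variable [Finite Γ] [HasFiniteProducts C]

noncomputable def cocycleLhs : ∏ᶜ (fun _ : Γ => G) ⟶ ∏ᶜ (fun _ : Γ × Γ => G) :=
  Pi.lift fun p => Pi.π _ (p.1 * p.2)

noncomputable def cocycleRhs : ∏ᶜ (fun _ : Γ => G) ⟶ ∏ᶜ (fun _ : Γ × Γ => G) :=
  Pi.lift fun p => homMul e (Pi.π _ p.1) (homSMul e ρ p.1 (Pi.π _ p.2))

lemma comp_cocycleLhs_eq_comp_cocycleRhs_iff {T : C} (l : T ⟶ ∏ᶜ (fun _ : Γ => G)) :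
    l ≫ cocycleLhs = l ≫ cocycleRhs e ρ ↔ IsHomCocycle e ρ (fun γ => l ≫ Pi.π _ γ) := by
  have key : ∀ σ τ : Γ, (l ≫ cocycleLhs ≫ Pi.π _ (σ, τ) = l ≫ cocycleRhs e ρ ≫ Pi.π _ (σ, τ)) ↔
      l ≫ Pi.π _ (σ * τ) = homMul e (l ≫ Pi.π _ σ) (homSMul e ρ σ (l ≫ Pi.π _ τ)) := by
    simp [cocycleLhs, cocycleRhs, comp_homMul, comp_homSMul]
  refine ⟨fun h σ τ => (key σ τ).1 (by rw [reassoc_of% h]), fun h => ?_⟩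
  ext ⟨σ, τ⟩
  simpa only [Category.assoc] using (key σ τ).2 (h σ τ)

variable [HasEqualizers C]

noncomputable abbrev cocycles : C := equalizer (cocycleLhs (G := G) (Γ := Γ)) (cocycleRhs e ρ)

noncomputable def universalCocycle (γ : Γ) : cocycles e ρ ⟶ G :=
  equalizer.ι _ _ ≫ Pi.π _ γ

lemma isHomCocycle_comp_universalCocycle {T : C} (φ' : T ⟶ cocycles e ρ) :
    IsHomCocycle e ρ (fun γ => φ' ≫ universalCocycle e ρ γ) := by
  simpa only [universalCocycle, Category.assoc] using
    (comp_cocycleLhs_eq_comp_cocycleRhs_iff e ρ (φ' ≫ equalizer.ι _ _)).1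
      (by rw [Category.assoc, equalizer.condition, Category.assoc])

lemma existsUnique_comp_universalCocycle {T : C} {a : Γ → (T ⟶ G)} (ha : IsHomCocycle e ρ a) :
    ∃! φ' : T ⟶ cocycles e ρ, ∀ γ, a γ = φ' ≫ universalCocycle e ρ γ := by
  have hfork : Pi.lift a ≫ cocycleLhs = Pi.lift a ≫ cocycleRhs e ρ :=
    (comp_cocycleLhs_eq_comp_cocycleRhs_iff e ρ _).2 (by simpa only [Pi.lift_π] using ha)
  refine ⟨equalizer.lift _ hfork, fun γ => ?_, fun ψ hψ => ?_⟩
  · rw [universalCocycle, equalizer.lift_ι_assoc, Pi.lift_π]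
  · refine equalizer.hom_ext (Pi.hom_ext _ _ fun γ => ?_)
    rw [Category.assoc, Category.assoc, equalizer.lift_ι_assoc, Pi.lift_π, ← universalCocycle,
      ← hψ γ]

end CategoryTheory.GrpCocycle

namespace AlgebraicGeometry

lemma isAffine_of_retract {S X : Scheme} (r : Retract S X) [IsAffine X] : IsAffine S := by
  have : IsClosedImmersion (r.i ≫ r.r) := by rw [r.retract]; infer_instance
  have : IsClosedImmersion r.i := .of_comp r.i r.r
  exact isAffine_of_isAffineHom r.i

open CategoryTheory.Over.ConstructProducts in
lemma isAffine_pi_left {S : Scheme} [IsAffine S] {I : Type*} [Finite I] (X : I → Over S)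
    [∀ i, IsAffine (X i).left] : IsAffine (∏ᶜ X).left := by
  have hlim := IsLimit.ofPreservesConeTerminal
    (conesEquiv S (Discrete.functor X)).inverse (limit.isLimit (Discrete.functor X))
  have : ∀ j, IsAffine ((widePullbackDiagramOfDiagramOver S (Discrete.functor X)).obj j) := by
    rintro (_ | i)
    exacts [‹IsAffine S›, ‹∀ i, IsAffine (X i).left› i]
  exact Scheme.isAffine_of_isLimit _ hlim

lemma isAffine_equalizer_left {S : Scheme} {X Y : Over S} (f g : X ⟶ Y)
    [IsAffine X.left] [IsAffine Y.left] : IsAffine (equalizer f g).left :=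
  isAffine_of_isAffineHom (equalizer.ι f g).left

end AlgebraicGeometry

open CategoryTheory.GrpCocycle

/-- let `Γ` be a finite group, `S` a scheme, and `G` a group scheme over `S`
(encoded as an `S`-scheme `G` together with a `Grp`-valued functor `grpH` on `S`-schemes and
an identification `iso` of its underlying set-valued functor with the functor of points of
`G`, so that each `G(T) = Hom_S(T, G)` is functorially a group), equipped with a `Γ`-action
by group-scheme automorphisms (a homomorphism `ρ` from `Γ` to the automorphisms of the
group-valued functor `grpH`).  Then the 1-cocycle functor
`T ↦ {φ : Γ → G(T) | φ (σ*τ) = φ σ * σ·(φ τ)}` is representable by an `S`-scheme `Z` (with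
universal 1-cocycle given by morphisms `c γ : Z ⟶ G`, so that a morphism `φ' : T ⟶ Z`
corresponds exactly to the 1-cocycle `γ ↦ φ' ≫ c γ`), which is affine whenever `G` is
affine. -/
theorem cocycle_functor_representable (S : Scheme) (Γ : Type) [Group Γ] [Finite Γ]
    (G : Over S) (grpH : (Over S)ᵒᵖ ⥤ GrpCat) (iso : grpH ⋙ forget GrpCat ≅ yoneda.obj G)
    (ρ : Γ →* Aut grpH) :
    ∃ (Z : Over S) (c : Γ → (Z ⟶ G)),
      (IsAffine G.left → IsAffine Z.left) ∧
      (∀ (T : Over S) (φ' : T ⟶ Z) (φ : Γ → grpH.obj (op T)),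
        (∀ γ : Γ, iso.hom.app (op T) (φ γ) = φ' ≫ c γ) →
          ∀ σ τ : Γ, φ (σ * τ) = φ σ * ((ρ σ).hom.app (op T)) (φ τ)) ∧
      (∀ (T : Over S) (φ : Γ → grpH.obj (op T)),
        (∀ σ τ : Γ, φ (σ * τ) = φ σ * ((ρ σ).hom.app (op T)) (φ τ)) →
          ∃! φ' : T ⟶ Z, ∀ γ : Γ, iso.hom.app (op T) (φ γ) = φ' ≫ c γ) := by
  refine ⟨cocycles iso ρ, universalCocycle iso ρ, fun _ => ?_, fun T φ' φ hφ => ?_,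
    fun T φ hφ => ?_⟩
  · have : IsAffine S :=
      isAffine_of_retract ⟨(iso.hom.app (op (Over.mk (𝟙 S))) 1).left, G.hom, Over.w _⟩
    have := isAffine_pi_left fun _ : Γ => G
    have := isAffine_pi_left fun _ : Γ × Γ => G
    exact isAffine_equalizer_left _ _
  · refine (isHomCocycle_hom_app_iff iso ρ φ).1 ?_
    rw [funext hφ]
    exact isHomCocycle_comp_universalCocycle iso ρ φ'
  · exact existsUnique_comp_universalCocycle iso ρ ((isHomCocycle_hom_app_iff iso ρ φ).2 hφ)
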